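/- (Proposition 4.1) For every (α+, α-, β+, β-, ϑ, ξ) ∈ ℝ⁶ satisfying α+*α- = 0, α+*(ξ+ϑ) = 0, α-*(ξ-ϑ) = 0, the element r = -α+ D∧P - α- D∧K + β+ P∧M + β- K∧M - ϑ D∧M + ξ P∧K makes the coboundary cocommutator δ_r a Lie bialgebra cocommutator on S, and δ_r(D) = α+ D∧P - α- D∧K - β+ P∧M + β- K∧M, δ_r(P) = α-(D∧M - P∧K) - (ϑ+ξ) P∧M, δ_r(K) = -α+(D∧M + P∧K) + (ϑ-ξ) K∧M, δ_r(M) = 0 (so the harmonic oscillator subalgebra span{D,P,K,M} is a Lie sub-bialgebra), with δ_r(H) = 2α+ P∧H + α-(D∧P + 2 K∧H) - β- P∧M - 2ϑ H∧M and δ_r(C) = -2α- K∧C - α+(D∧K + 2 P∧C) + β+ K∧M + 2ϑ C∧M; moreover [[r,r]] = (α+*β- + α-*β+ - ξ^2) K∧M∧P. -/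

import Mathlib

/-!
δ_r is a coboundary, so it is a 1-cocycle (X ↦ X·(-) is a representation of S on S⊗S), and it
is S∧S-valued because r is. Co-Jacobi for δ_r amounts to ad-invariance of [[r,r]], and for
arbitrary parameters
[[r,r]] = (α₊β₋ + α₋β₊ - ξ²) K∧M∧P + 2α₊α₋ D∧P∧K + α₊(ξ+ϑ) D∧P∧M + α₋(ξ-ϑ) D∧K∧M,
where K∧M∧P is ad-invariant and the three constraints kill exactly the other terms. Co-Jacobi
itself is verified directly: it is linear in X, so it suffices to check it on the basis, in each
of the branches α₊ = α₋ = 0, (α₊ = 0, ξ = ϑ), (α₋ = 0, ξ = -ϑ) of the constraints.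
-/


open TensorProduct

noncomputable section

variable (L : Type) [LieRing L] [LieAlgebra ℝ L]

/-- The wedge X∧Y = X⊗Y - Y⊗X in S⊗S. -/
def wedge (X Y : L) : L ⊗[ℝ] L := X ⊗ₜ[ℝ] Y - Y ⊗ₜ[ℝ] X

/-- The adjoint action of X on S⊗S: X·r = (ad_X⊗id + id⊗ad_X)(r). -/
def act (X : L) : (L ⊗[ℝ] L) →ₗ[ℝ] (L ⊗[ℝ] L) :=
  LinearMap.rTensor L (LieAlgebra.ad ℝ L X) + LinearMap.lTensor L (LieAlgebra.ad ℝ L X)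

/-- S∧S: the span of wedges, i.e. the skew-symmetric part of S⊗S. -/
def skewPart : Submodule ℝ (L ⊗[ℝ] L) :=
  Submodule.span ℝ {w | ∃ X Y : L, w = wedge L X Y}

/-- 1-cocycle condition. -/
def IsCocycle (δ : L → L ⊗[ℝ] L) : Prop :=
  ∀ X Y : L, δ ⁅X, Y⁆ = act L X (δ Y) - act L Y (δ X)

/-- The coboundary cocommutator δ_r(X) = X·r, as a linear map. -/
def cobdry (r : L ⊗[ℝ] L) : L →ₗ[ℝ] L ⊗[ℝ] L where
  toFun X := act L X r
  map_add' X Y := by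
    have h : LieAlgebra.ad ℝ L (X + Y) = LieAlgebra.ad ℝ L X + LieAlgebra.ad ℝ L Y :=
      map_add (LieAlgebra.ad ℝ L) X Y
    simp only [act, h, LinearMap.rTensor_add, LinearMap.lTensor_add, LinearMap.add_apply]
    abel
  map_smul' c X := by
    have h : LieAlgebra.ad ℝ L (c • X) = c • LieAlgebra.ad ℝ L X := map_smul (LieAlgebra.ad ℝ L) c X
    simp only [act, h, LinearMap.rTensor_smul, LinearMap.lTensor_smul, LinearMap.add_apply,
      LinearMap.smul_apply, RingHom.id_apply, smul_add]

/-- The cyclic permutation ζ : x⊗y⊗z ↦ z⊗x⊗y on (S⊗S)⊗S. -/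
def zeta : ((L ⊗[ℝ] L) ⊗[ℝ] L) →ₗ[ℝ] ((L ⊗[ℝ] L) ⊗[ℝ] L) :=
  ((TensorProduct.assoc ℝ L L L).symm.toLinearMap).comp
    ((TensorProduct.comm ℝ (L ⊗[ℝ] L) L).toLinearMap)

/-- The co-Jacobi identity for a linear map δ : S → S⊗S. -/
def CoJacobi (δ : L →ₗ[ℝ] L ⊗[ℝ] L) : Prop :=
  ∀ X : L,
    ((LinearMap.id : ((L ⊗[ℝ] L) ⊗[ℝ] L) →ₗ[ℝ] ((L ⊗[ℝ] L) ⊗[ℝ] L)) + zeta L +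
      zeta L ∘ₗ zeta L) (LinearMap.rTensor L δ (δ X)) = 0

/-- A Lie bialgebra cocommutator: skew-symmetric-valued 1-cocycle satisfying co-Jacobi. -/
def IsBialgCocomm (δ : L →ₗ[ℝ] L ⊗[ℝ] L) : Prop :=
  (∀ X : L, δ X ∈ skewPart L) ∧ IsCocycle L ⇑δ ∧ CoJacobi L δ

/-- The general 15-parameter skew-symmetric element r(a,b,c) of S⊗S. -/
def rGen (D H P K C M : L) (a1 a2 a3 a4 a5 a6 b1 b2 b3 b4 b5 b6 c1 c2 c3 : ℝ) :
    L ⊗[ℝ] L :=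
  a1 • wedge L D P + a2 • wedge L D H + a3 • wedge L P M + a4 • wedge L H M +
    a5 • wedge L P H + a6 • wedge L P C + b1 • wedge L D K + b2 • wedge L D C +
    b3 • wedge L K M + b4 • wedge L C M + b5 • wedge L K C + b6 • wedge L K H +
    c1 • wedge L D M + c2 • wedge L P K + c3 • wedge L H C

/-- The 19 Schrödinger bialgebra equations. -/
def Eqs19 (a1 a2 a3 a4 a5 a6 b1 b2 b3 b4 b5 b6 c1 c2 c3 : ℝ) : Prop :=
  a6^2 + a6*b1 - 3*a1*b5 + b5*b6 = 0 ∧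
  a2*a3 - 2*a1*a4 - a4*b6 - 3*a5*c1 + a5*c2 = 0 ∧
  a1*a2 + a2*b6 - a5*c3 = 0 ∧
  a5*b1 - a1*b6 - 2*a2*c1 - a4*c3 = 0 ∧
  a4*a6 + a4*b1 - a2*b3 - a5*b4 + a1*c1 - a1*c2 = 0 ∧
  3*a1*b2 - a2*b5 + a6*c3 + b1*c3 = 0 ∧
  a3*b2 + 2*a1*b4 - a4*b5 + a6*c1 + a6*c2 + b3*c3 = 0 ∧
  3*a2*b5 + b2*b6 - a6*c3 = 0 ∧
  b6^2 + b6*a1 - 3*b1*a5 + a5*a6 = 0 ∧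
  b2*b3 - 2*b1*b4 - b4*a6 - 3*b5*c1 - b5*c2 = 0 ∧
  b1*b2 + b2*a6 + b5*c3 = 0 ∧
  b5*a1 - b1*a6 - 2*b2*c1 + b4*c3 = 0 ∧
  b4*b6 + b4*a1 - b2*a3 - b5*a4 + b1*c1 + b1*c2 = 0 ∧
  3*b1*a2 - b2*a5 - b6*c3 - a1*c3 = 0 ∧
  b3*a2 + 2*b1*a4 - b4*a5 + b6*c1 - b6*c2 - a3*c3 = 0 ∧
  3*b2*a5 + a2*a6 + b6*c3 = 0 ∧
  4*a2*b2 + c3^2 = 0 ∧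
  2*a4*b2 + 2*a2*b4 + a5*b5 - a6*b6 = 0 ∧
  2*a1*b1 - a1*a6 - b1*b6 + a5*b5 - a6*b6 = 0

/-- Full antisymmetrization X∧Y∧Z in (S⊗S)⊗S. -/
def wedge3 (X Y Z : L) : (L ⊗[ℝ] L) ⊗[ℝ] L :=
  (X ⊗ₜ[ℝ] Y) ⊗ₜ[ℝ] Z - (X ⊗ₜ[ℝ] Z) ⊗ₜ[ℝ] Y - (Y ⊗ₜ[ℝ] X) ⊗ₜ[ℝ] Z +
    (Y ⊗ₜ[ℝ] Z) ⊗ₜ[ℝ] X + (Z ⊗ₜ[ℝ] X) ⊗ₜ[ℝ] Y - (Z ⊗ₜ[ℝ] Y) ⊗ₜ[ℝ] X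

/-- The Schouten bracket [[r,r]], written in coordinates w.r.t. a basis. -/
def schouten (B : Module.Basis (Fin 6) ℝ L) (r : L ⊗[ℝ] L) : (L ⊗[ℝ] L) ⊗[ℝ] L :=
  ∑ i : Fin 6, ∑ j : Fin 6, ∑ k : Fin 6, ∑ l : Fin 6,
    (((B.tensorProduct B).repr r (i, j)) * ((B.tensorProduct B).repr r (k, l))) •
      ((⁅B i, B k⁆ ⊗ₜ[ℝ] B j) ⊗ₜ[ℝ] B l + (B i ⊗ₜ[ℝ] ⁅B j, B k⁆) ⊗ₜ[ℝ] B l +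
        (B i ⊗ₜ[ℝ] B k) ⊗ₜ[ℝ] ⁅B j, B l⁆)

/-- The adjoint-invariant elements of S⊗S. -/
def invariants : Submodule ℝ (L ⊗[ℝ] L) where
  carrier := {η | ∀ X : L, act L X η = 0}
  add_mem' := by
    intro a b ha hb X
    simp [map_add, ha X, hb X]
  zero_mem' := by intro X; simp
  smul_mem' := by
    intro c a ha X
    simp [map_smul, ha X]

/-- The space of skew-symmetric-valued 1-cocycles on S. -/
def cocycleSpace : Submodule ℝ (L →ₗ[ℝ] (L ⊗[ℝ] L)) where
  carrier := {δ | (∀ X : L, δ X ∈ skewPart L) ∧ IsCocycle L ⇑δ}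
  add_mem' := by
    rintro a b ⟨ha1, ha2⟩ ⟨hb1, hb2⟩
    refine ⟨fun X => add_mem (ha1 X) (hb1 X), fun X Y => ?_⟩
    simp only [LinearMap.add_apply, ha2 X Y, hb2 X Y, map_add]
    abel
  zero_mem' := by
    refine ⟨fun X => zero_mem _, fun X Y => ?_⟩
    simp
  smul_mem' := by
    rintro c a ⟨ha1, ha2⟩
    refine ⟨fun X => Submodule.smul_mem _ c (ha1 X), fun X Y => ?_⟩
    simp only [LinearMap.smul_apply, ha2 X Y, map_smul, smul_sub]

end

section LieBialgebra

variable {L : Type} [LieRing L] [LieAlgebra ℝ L]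

lemma act_tmul (X a b : L) : act L X (a ⊗ₜ[ℝ] b) = ⁅X, a⁆ ⊗ₜ[ℝ] b + a ⊗ₜ[ℝ] ⁅X, b⁆ := rfl

lemma act_wedge (X a b : L) : act L X (wedge L a b) = wedge L ⁅X, a⁆ b + wedge L a ⁅X, b⁆ := by
  simp only [wedge, map_sub, act_tmul]
  abel

lemma act_lie (X Y : L) : act L ⁅X, Y⁆ = act L X ∘ₗ act L Y - act L Y ∘ₗ act L X := by
  refine TensorProduct.ext' fun a b => ?_
  simp only [LinearMap.sub_apply, LinearMap.comp_apply, act_tmul, map_add, lie_lie, sub_tmul,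
    tmul_sub]
  abel

lemma cobdry_apply (r : L ⊗[ℝ] L) (X : L) : cobdry L r X = act L X r := rfl

lemma isCocycle_cobdry (r : L ⊗[ℝ] L) : IsCocycle L (cobdry L r) := fun X Y => by
  simp only [cobdry_apply, act_lie, LinearMap.sub_apply, LinearMap.comp_apply]

lemma act_mem_skewPart (X : L) {w : L ⊗[ℝ] L} (hw : w ∈ skewPart L) : act L X w ∈ skewPart L := by
  induction hw using Submodule.span_induction with
  | mem w hw =>
    obtain ⟨a, b, rfl⟩ := hw
    rw [act_wedge]
    exact add_mem (Submodule.subset_span ⟨_, _, rfl⟩) (Submodule.subset_span ⟨_, _, rfl⟩)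
  | zero => simp only [map_zero, zero_mem]
  | add x y _ _ hx hy => rw [map_add]; exact add_mem hx hy
  | smul c x _ hx => rw [map_smul]; exact Submodule.smul_mem _ _ hx

lemma wedge_mem_skewPart (a b : L) : wedge L a b ∈ skewPart L :=
  Submodule.subset_span ⟨a, b, rfl⟩

def cyclicSum : ((L ⊗[ℝ] L) ⊗[ℝ] L) →ₗ[ℝ] (L ⊗[ℝ] L) ⊗[ℝ] L :=
  LinearMap.id + zeta L + zeta L ∘ₗ zeta L

lemma cyclicSum_tmul (x y z : L) :
    cyclicSum ((x ⊗ₜ[ℝ] y) ⊗ₜ[ℝ] z) =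
      (x ⊗ₜ[ℝ] y) ⊗ₜ[ℝ] z + (z ⊗ₜ[ℝ] x) ⊗ₜ[ℝ] y + (y ⊗ₜ[ℝ] z) ⊗ₜ[ℝ] x := rfl

lemma coJacobi_of_basis {ι : Type*} (B : Module.Basis ι ℝ L) (δ : L →ₗ[ℝ] L ⊗[ℝ] L)
    (h : ∀ i, cyclicSum (LinearMap.rTensor L δ (δ (B i))) = 0) : CoJacobi L δ := by
  have : cyclicSum ∘ₗ LinearMap.rTensor L δ ∘ₗ δ = 0 := B.ext fun i => h i
  exact fun X => LinearMap.congr_fun this X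

lemma isBialgCocomm_cobdry {r : L ⊗[ℝ] L} (hr : r ∈ skewPart L) (h : CoJacobi L (cobdry L r)) :
    IsBialgCocomm L (cobdry L r) :=
  ⟨fun X => act_mem_skewPart X hr, isCocycle_cobdry r, h⟩

def schoutenFormAux (a b : L) : L ⊗[ℝ] L →ₗ[ℝ] (L ⊗[ℝ] L) ⊗[ℝ] L :=
  TensorProduct.lift <| LinearMap.mk₂ ℝ
    (fun c d => (⁅a, c⁆ ⊗ₜ[ℝ] b) ⊗ₜ[ℝ] d + (a ⊗ₜ[ℝ] ⁅b, c⁆) ⊗ₜ[ℝ] d + (a ⊗ₜ[ℝ] c) ⊗ₜ[ℝ] ⁅b, d⁆)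
    (by intros; simp only [lie_add, add_tmul, tmul_add]; abel)
    (by intros; simp only [lie_smul, smul_tmul', tmul_smul, smul_add])
    (by intros; simp only [lie_add, tmul_add]; abel)
    (by intros; simp only [lie_smul, tmul_smul, smul_add])

lemma schoutenFormAux_tmul (a b c d : L) : schoutenFormAux a b (c ⊗ₜ[ℝ] d) =
    (⁅a, c⁆ ⊗ₜ[ℝ] b) ⊗ₜ[ℝ] d + (a ⊗ₜ[ℝ] ⁅b, c⁆) ⊗ₜ[ℝ] d + (a ⊗ₜ[ℝ] c) ⊗ₜ[ℝ] ⁅b, d⁆ := rfl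

def schoutenForm : L ⊗[ℝ] L →ₗ[ℝ] L ⊗[ℝ] L →ₗ[ℝ] (L ⊗[ℝ] L) ⊗[ℝ] L :=
  TensorProduct.lift <| LinearMap.mk₂ ℝ schoutenFormAux
    (fun _ _ _ => TensorProduct.ext' fun _ _ => by
      simp only [schoutenFormAux_tmul, LinearMap.add_apply, add_lie, add_tmul]; abel)
    (fun _ _ _ => TensorProduct.ext' fun _ _ => by
      simp only [schoutenFormAux_tmul, LinearMap.smul_apply, smul_lie, smul_tmul', smul_add])
    (fun _ _ _ => TensorProduct.ext' fun _ _ => by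
      simp only [schoutenFormAux_tmul, LinearMap.add_apply, add_lie, add_tmul, tmul_add]; abel)
    (fun _ _ _ => TensorProduct.ext' fun _ _ => by
      simp only [schoutenFormAux_tmul, LinearMap.smul_apply, smul_lie, smul_tmul', tmul_smul,
        smul_add])

lemma schoutenForm_tmul_tmul (a b c d : L) : schoutenForm (a ⊗ₜ[ℝ] b) (c ⊗ₜ[ℝ] d) =
    (⁅a, c⁆ ⊗ₜ[ℝ] b) ⊗ₜ[ℝ] d + (a ⊗ₜ[ℝ] ⁅b, c⁆) ⊗ₜ[ℝ] d + (a ⊗ₜ[ℝ] c) ⊗ₜ[ℝ] ⁅b, d⁆ := rfl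

lemma schouten_eq_schoutenForm (B : Module.Basis (Fin 6) ℝ L) (r : L ⊗[ℝ] L) :
    schouten L B r = schoutenForm r r := by
  conv_rhs => rw [← (B.tensorProduct B).sum_repr r]
  simp only [map_sum, map_smul, LinearMap.sum_apply, LinearMap.smul_apply, Finset.smul_sum,
    smul_smul, Module.Basis.tensorProduct_apply', schoutenForm_tmul_tmul]
  rw [Finset.sum_comm]
  simp only [schouten, Fintype.sum_prod_type, mul_comm]

end LieBialgebra

section Oscillator

variable {L : Type} [LieRing L] [LieAlgebra ℝ L]

/-- The brackets of S with at least one entry in the oscillator subalgebra span{D, P, K, M}. -/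
structure OscillatorBrackets (D H P K C M : L) : Prop where
  DP : ⁅D, P⁆ = -P
  DK : ⁅D, K⁆ = K
  KP : ⁅K, P⁆ = M
  DH : ⁅D, H⁆ = (-2 : ℝ) • H
  DC : ⁅D, C⁆ = (2 : ℝ) • C
  KH : ⁅K, H⁆ = P
  PC : ⁅P, C⁆ = -K
  KC : ⁅K, C⁆ = 0
  PH : ⁅P, H⁆ = 0
  M_lie : ∀ X : L, ⁅M, X⁆ = 0

namespace OscillatorBrackets

variable {D H P K C M : L}

lemma PD (hS : OscillatorBrackets D H P K C M) : ⁅P, D⁆ = P := by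
  rw [← lie_skew, hS.DP, neg_neg]

lemma KD (hS : OscillatorBrackets D H P K C M) : ⁅K, D⁆ = -K := by
  rw [← lie_skew, hS.DK]

lemma PK (hS : OscillatorBrackets D H P K C M) : ⁅P, K⁆ = -M := by
  rw [← lie_skew, hS.KP]

lemma HD (hS : OscillatorBrackets D H P K C M) : ⁅H, D⁆ = (2 : ℝ) • H := by
  rw [← lie_skew, hS.DH, neg_smul, neg_neg]

lemma CD (hS : OscillatorBrackets D H P K C M) : ⁅C, D⁆ = (-2 : ℝ) • C := by
  rw [← lie_skew, hS.DC, neg_smul]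

lemma HK (hS : OscillatorBrackets D H P K C M) : ⁅H, K⁆ = -P := by
  rw [← lie_skew, hS.KH]

lemma CP (hS : OscillatorBrackets D H P K C M) : ⁅C, P⁆ = K := by
  rw [← lie_skew, hS.PC, neg_neg]

lemma CK (hS : OscillatorBrackets D H P K C M) : ⁅C, K⁆ = 0 := by
  rw [← lie_skew, hS.KC, neg_zero]

lemma HP (hS : OscillatorBrackets D H P K C M) : ⁅H, P⁆ = 0 := by
  rw [← lie_skew, hS.PH, neg_zero]

lemma lie_M (hS : OscillatorBrackets D H P K C M) (X : L) : ⁅X, M⁆ = 0 := by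
  rw [← lie_skew, hS.M_lie, neg_zero]

end OscillatorBrackets

def oscillatorR (D P K M : L) (αp αm βp βm θ ξ : ℝ) : L ⊗[ℝ] L :=
  -(αp • wedge L D P) - αm • wedge L D K + βp • wedge L P M + βm • wedge L K M -
    θ • wedge L D M + ξ • wedge L P K

lemma oscillatorR_mem_skewPart (D P K M : L) (αp αm βp βm θ ξ : ℝ) :
    oscillatorR D P K M αp αm βp βm θ ξ ∈ skewPart L := by
  have h (c : ℝ) (a b : L) : c • wedge L a b ∈ skewPart L :=
    Submodule.smul_mem _ c (wedge_mem_skewPart a b)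
  exact add_mem (sub_mem (add_mem (add_mem (sub_mem (neg_mem (h _ _ _)) (h _ _ _)) (h _ _ _))
    (h _ _ _)) (h _ _ _)) (h _ _ _)

variable {D H P K C M : L}

lemma cobdry_oscillatorR (hS : OscillatorBrackets D H P K C M) (αp αm βp βm θ ξ : ℝ) :
    let δ := cobdry L (oscillatorR D P K M αp αm βp βm θ ξ)
    δ D = αp • wedge L D P - αm • wedge L D K - βp • wedge L P M + βm • wedge L K M ∧
    δ P = αm • (wedge L D M - wedge L P K) - (θ + ξ) • wedge L P M ∧
    δ K = -(αp • (wedge L D M + wedge L P K)) + (θ - ξ) • wedge L K M ∧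
    δ M = 0 ∧
    δ H = (2 * αp) • wedge L P H + αm • (wedge L D P + (2 : ℝ) • wedge L K H) -
      βm • wedge L P M - (2 * θ) • wedge L H M ∧
    δ C = -((2 * αm) • wedge L K C) - αp • (wedge L D K + (2 : ℝ) • wedge L P C) +
      βp • wedge L K M + (2 * θ) • wedge L C M := by
  refine ⟨?_, ?_, ?_, ?_, ?_, ?_⟩ <;>
  simp only [cobdry_apply, oscillatorR, wedge, map_add, map_sub, map_neg, map_smul, act_tmul,
    hS.DP, hS.DK, hS.KP, hS.M_lie, hS.PD, hS.KD, hS.PK, hS.HD, hS.CD, hS.HK, hS.CP, hS.CK, hS.HP,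
    hS.lie_M, lie_self, neg_tmul, tmul_neg, ← smul_tmul', tmul_smul, zero_tmul, tmul_zero] <;>
  module

lemma schoutenForm_oscillatorR (hS : OscillatorBrackets D H P K C M) (αp αm βp βm θ ξ : ℝ) :
    let r := oscillatorR D P K M αp αm βp βm θ ξ
    schoutenForm r r = (αp * βm + αm * βp - ξ ^ 2) • wedge3 L K M P +
      (2 * (αp * αm)) • wedge3 L D P K + (αp * (ξ + θ)) • wedge3 L D P M +
      (αm * (ξ - θ)) • wedge3 L D K M := by
  simp only [oscillatorR, wedge, wedge3, map_add, map_sub, map_neg, map_smul, LinearMap.add_apply,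
    LinearMap.sub_apply, LinearMap.neg_apply, LinearMap.smul_apply, schoutenForm_tmul_tmul,
    hS.DP, hS.DK, hS.KP, hS.M_lie, hS.PD, hS.KD, hS.PK, hS.lie_M, lie_self,
    neg_tmul, tmul_neg, zero_tmul, tmul_zero]
  module

lemma oscillator_params_cases {αp αm θ ξ : ℝ} (h1 : αp * αm = 0) (h2 : αp * (ξ + θ) = 0)
    (h3 : αm * (ξ - θ) = 0) :
    (αp = 0 ∧ αm = 0) ∨ (αp = 0 ∧ ξ = θ) ∨ (αm = 0 ∧ ξ = -θ) := by
  rcases mul_eq_zero.mp h1 with hp | hm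
  · rcases mul_eq_zero.mp h3 with hm | hξ
    · exact .inl ⟨hp, hm⟩
    · exact .inr (.inl ⟨hp, sub_eq_zero.mp hξ⟩)
  · rcases mul_eq_zero.mp h2 with hp | hξ
    · exact .inl ⟨hp, hm⟩
    · exact .inr (.inr ⟨hm, eq_neg_of_add_eq_zero_left hξ⟩)

lemma coJacobi_cobdry_oscillatorR (hS : OscillatorBrackets D H P K C M)
    (B : Module.Basis (Fin 6) ℝ L) (hB : ⇑B = ![D, H, P, K, C, M]) {αp αm θ ξ : ℝ}
    (βp βm : ℝ) (h1 : αp * αm = 0) (h2 : αp * (ξ + θ) = 0) (h3 : αm * (ξ - θ) = 0) :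
    CoJacobi L (cobdry L (oscillatorR D P K M αp αm βp βm θ ξ)) := by
  obtain ⟨hD, hP, hK, hM, hH, hC⟩ := cobdry_oscillatorR hS αp αm βp βm θ ξ
  refine coJacobi_of_basis B _ fun i => ?_
  fin_cases i <;>
  simp only [hB, Fin.zero_eta, Fin.mk_one, Fin.reduceFinMk, Matrix.cons_val, hD, hP, hK, hM, hH,
    hC, wedge, map_add, map_sub, map_neg, map_smul, map_zero, LinearMap.rTensor_tmul, sub_tmul,
    add_tmul, neg_tmul, ← smul_tmul', zero_tmul, cyclicSum_tmul] <;>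
  rcases oscillator_params_cases h1 h2 h3 with ⟨rfl, rfl⟩ | ⟨rfl, rfl⟩ | ⟨rfl, rfl⟩ <;>
  module

end Oscillator

theorem statement12_general (L : Type) [LieRing L] [LieAlgebra ℝ L]
    (D H P K C M : L) (B : Module.Basis (Fin 6) ℝ L)
    (hB : ⇑B = ![D, H, P, K, C, M])
    (hDP : ⁅D, P⁆ = -P) (hDK : ⁅D, K⁆ = K) (hKP : ⁅K, P⁆ = M)
    (hDH : ⁅D, H⁆ = (-2 : ℝ) • H) (hDC : ⁅D, C⁆ = (2 : ℝ) • C)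
    (hKH : ⁅K, H⁆ = P) (hPC : ⁅P, C⁆ = -K) (hKC : ⁅K, C⁆ = 0) (hPH : ⁅P, H⁆ = 0)
    (hM : ∀ X : L, ⁅M, X⁆ = 0)
    (alphap alpham betap betam th xi : ℝ)
    (h1 : alphap*alpham = 0) (h2 : alphap*(xi + th) = 0) (h3 : alpham*(xi - th) = 0)
    (r : L ⊗[ℝ] L)
    (hr : r = -(alphap • wedge L D P) - alpham • wedge L D K + betap • wedge L P M +
      betam • wedge L K M - th • wedge L D M + xi • wedge L P K) :
    IsBialgCocomm L (cobdry L r) ∧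
    cobdry L r D = alphap • wedge L D P - alpham • wedge L D K - betap • wedge L P M +
      betam • wedge L K M ∧
    cobdry L r P = alpham • (wedge L D M - wedge L P K) - (th + xi) • wedge L P M ∧
    cobdry L r K = -(alphap • (wedge L D M + wedge L P K)) + (th - xi) • wedge L K M ∧
    cobdry L r M = 0 ∧
    cobdry L r H = (2*alphap) • wedge L P H +
      alpham • (wedge L D P + (2:ℝ) • wedge L K H) - betam • wedge L P M -
      (2*th) • wedge L H M ∧
    cobdry L r C = -((2*alpham) • wedge L K C) -
      alphap • (wedge L D K + (2:ℝ) • wedge L P C) + betap • wedge L K M +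
      (2*th) • wedge L C M ∧
    schouten L B r = (alphap*betam + alpham*betap - xi^2) • wedge3 L K M P := by
  have hS : OscillatorBrackets D H P K C M :=
    ⟨hDP, hDK, hKP, hDH, hDC, hKH, hPC, hKC, hPH, hM⟩
  obtain rfl : r = oscillatorR D P K M alphap alpham betap betam th xi := hr
  obtain ⟨hδD, hδP, hδK, hδM, hδH, hδC⟩ := cobdry_oscillatorR hS alphap alpham betap betam th xi
  refine ⟨isBialgCocomm_cobdry (oscillatorR_mem_skewPart D P K M _ _ _ _ _ _)
    (coJacobi_cobdry_oscillatorR hS B hB betap betam h1 h2 h3), hδD, hδP, hδK, hδM, hδH, hδC, ?_⟩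
  rw [schouten_eq_schoutenForm, schoutenForm_oscillatorR hS, h1, h2, h3]
  simp only [mul_zero, zero_smul, add_zero]

theorem statement12 (L : Type) [LieRing L] [LieAlgebra ℝ L]
    (D H P K C M : L) (B : Module.Basis (Fin 6) ℝ L)
    (hB : ⇑B = ![D, H, P, K, C, M])
    (hDP : ⁅D, P⁆ = -P) (hDK : ⁅D, K⁆ = K) (hKP : ⁅K, P⁆ = M)
    (hDH : ⁅D, H⁆ = (-2 : ℝ) • H) (hDC : ⁅D, C⁆ = (2 : ℝ) • C) (hHC : ⁅H, C⁆ = D)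
    (hKH : ⁅K, H⁆ = P) (hPC : ⁅P, C⁆ = -K) (hKC : ⁅K, C⁆ = 0) (hPH : ⁅P, H⁆ = 0)
    (hM : ∀ X : L, ⁅M, X⁆ = 0)
    (alphap alpham betap betam th xi : ℝ)
    (h1 : alphap*alpham = 0) (h2 : alphap*(xi + th) = 0) (h3 : alpham*(xi - th) = 0)
    (r : L ⊗[ℝ] L)
    (hr : r = -(alphap • wedge L D P) - alpham • wedge L D K + betap • wedge L P M +
      betam • wedge L K M - th • wedge L D M + xi • wedge L P K) :
    IsBialgCocomm L (cobdry L r) ∧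
    cobdry L r D = alphap • wedge L D P - alpham • wedge L D K - betap • wedge L P M +
      betam • wedge L K M ∧
    cobdry L r P = alpham • (wedge L D M - wedge L P K) - (th + xi) • wedge L P M ∧
    cobdry L r K = -(alphap • (wedge L D M + wedge L P K)) + (th - xi) • wedge L K M ∧
    cobdry L r M = 0 ∧
    cobdry L r H = (2*alphap) • wedge L P H +
      alpham • (wedge L D P + (2:ℝ) • wedge L K H) - betam • wedge L P M -
      (2*th) • wedge L H M ∧
    cobdry L r C = -((2*alpham) • wedge L K C) -
      alphap • (wedge L D K + (2:ℝ) • wedge L P C) + betap • wedge L K M +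
      (2*th) • wedge L C M ∧
    schouten L B r = (alphap*betam + alpham*betap - xi^2) • wedge3 L K M P :=
  statement12_general L D H P K C M B hB hDP hDK hKP hDH hDC hKH hPC hKC hPH hM alphap alpham betap
    betam th xi h1 h2 h3 r hr
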